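/- ReLU-CNTK Pi-tensor norm identity: with Π^{(0)} := 0 and Π^{(h)}_{i,j,i',j'}(y,z) := Σ_{a,b}[Π^{(h-1)}(y,z)⊙Γ̇^{(h)}(y,z) + Γ^{(h)}(y,z)]_{i+a,j+b,i'+a,j'+b} for 1 ≤ h ≤ L-1, and Π^{(L)} := Π^{(L-1)}⊙Γ̇^{(L)}, the diagonal entries satisfy Π^{(h)}_{i,j,i,j}(y,y) = h·N^{(h+1)}_{i,j}(y) for h < L, and Π^{(L)}_{i,j,i,j}(y,y) = ((L-1)/q²)·N^{(L)}_{i,j}(y); moreover |Π^{(h)}_{i,j,i',j'}(y,z)| ≤ √(Π^{(h)}_{i,j,i,j}(y,y)·Π^{(h)}_{i',j',i',j'}(z,z)). -/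

import Mathlib

open Real

noncomputable def kappa0 (α : ℝ) : ℝ :=
  (Real.pi - Real.arccos α) / Real.pi

noncomputable def kappa1 (α : ℝ) : ℝ :=
  (Real.sqrt (1 - α ^ 2) + α * (Real.pi - Real.arccos α)) / Real.pi

lemma sum_sqrt_mul_le {ι : Type*} (s : Finset ι) (f g : ι → ℝ)
    (hf : ∀ i ∈ s, 0 ≤ f i) (hg : ∀ i ∈ s, 0 ≤ g i) :
    ∑ i ∈ s, Real.sqrt (f i * g i) ≤ Real.sqrt ((∑ i ∈ s, f i) * ∑ i ∈ s, g i) := by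
  have h := Finset.sum_sq_le_sum_mul_sum_of_sq_eq_mul s hf hg
    (fun i hi => Real.sq_sqrt (mul_nonneg (hf i hi) (hg i hi)))
  calc ∑ i ∈ s, Real.sqrt (f i * g i)
      = Real.sqrt ((∑ i ∈ s, Real.sqrt (f i * g i)) ^ 2) :=
        (Real.sqrt_sq (Finset.sum_nonneg fun i _ => Real.sqrt_nonneg _)).symm
    _ ≤ _ := Real.sqrt_le_sqrt h

lemma sqrt_add_sqrt_le {a b c d : ℝ} (ha : 0 ≤ a) (hb : 0 ≤ b) (hc : 0 ≤ c) (hd : 0 ≤ d) :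
    Real.sqrt (a * c) + Real.sqrt (b * d) ≤ Real.sqrt ((a + b) * (c + d)) := by
  have e1 : Real.sqrt (a*c) ^ 2 = a * c := Real.sq_sqrt (by positivity)
  have e2 : Real.sqrt (b*d) ^ 2 = b * d := Real.sq_sqrt (by positivity)
  have e3 : Real.sqrt (a*c) * Real.sqrt (b*d) = Real.sqrt (a*d) * Real.sqrt (b*c) := by
    rw [← Real.sqrt_mul (by positivity), ← Real.sqrt_mul (by positivity)]
    ring_nf
  have e4 : Real.sqrt (a*d) ^ 2 = a * d := Real.sq_sqrt (by positivity)
  have e5 : Real.sqrt (b*c) ^ 2 = b * c := Real.sq_sqrt (by positivity)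
  have h1 : (Real.sqrt (a*c) + Real.sqrt (b*d)) ^ 2 ≤ (a + b) * (c + d) := by
    nlinarith [sq_nonneg (Real.sqrt (a*d) - Real.sqrt (b*c))]
  calc Real.sqrt (a*c) + Real.sqrt (b*d)
      = Real.sqrt ((Real.sqrt (a*c) + Real.sqrt (b*d)) ^ 2) :=
        (Real.sqrt_sq (by positivity)).symm
    _ ≤ _ := Real.sqrt_le_sqrt h1

lemma kappa0_nonneg (α : ℝ) : 0 ≤ kappa0 α :=
  div_nonneg (sub_nonneg.2 (Real.arccos_le_pi α)) Real.pi_pos.le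

lemma kappa0_le_one (α : ℝ) : kappa0 α ≤ 1 := by
  rw [kappa0, div_le_one Real.pi_pos]
  have := Real.arccos_nonneg α; linarith

lemma kappa0_one : kappa0 1 = 1 := by
  rw [kappa0, Real.arccos_one, sub_zero, div_self Real.pi_ne_zero]

lemma kappa1_one : kappa1 1 = 1 := by
  rw [kappa1, Real.arccos_one]
  norm_num [div_self Real.pi_ne_zero]

lemma kappa1_le_one {α : ℝ} (h1 : -1 ≤ α) (h2 : α ≤ 1) : kappa1 α ≤ 1 := by
  rw [kappa1, div_le_one Real.pi_pos]
  have hθ0 : 0 ≤ Real.arccos α := Real.arccos_nonneg α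
  have hθπ : Real.arccos α ≤ π := Real.arccos_le_pi α
  have hcos : Real.cos (Real.arccos α) = α := Real.cos_arccos h1 h2
  rw [show Real.sqrt (1 - α ^ 2) = Real.sin (Real.arccos α) from (Real.sin_arccos α).symm]
  have h3 : Real.sin (Real.arccos α) ≤ Real.arccos α := Real.sin_le hθ0
  nlinarith [mul_nonneg (sub_nonneg.2 h2) (sub_nonneg.2 hθπ)]

lemma kappa1_nonneg {α : ℝ} (h1 : -1 ≤ α) (h2 : α ≤ 1) : 0 ≤ kappa1 α := by
  rw [kappa1]
  apply div_nonneg _ Real.pi_pos.le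
  set θ := Real.arccos α with hθ
  have hθ0 : 0 ≤ θ := Real.arccos_nonneg α
  have hθπ : θ ≤ π := Real.arccos_le_pi α
  have hcos : Real.cos θ = α := Real.cos_arccos h1 h2
  rw [show Real.sqrt (1 - α ^ 2) = Real.sin θ from (Real.sin_arccos α).symm, ← hcos]
  rcases le_or_gt 0 (Real.cos θ) with hc | hc
  · have := Real.sin_nonneg_of_nonneg_of_le_pi hθ0 hθπ
    nlinarith
  · have hφ2 : π - θ < π / 2 := by
      by_contra hcon
      push_neg at hcon
      have : 0 ≤ Real.cos θ :=
        Real.cos_nonneg_of_mem_Icc ⟨by linarith [Real.pi_pos], by linarith⟩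
      linarith
    have hφ0 : 0 ≤ π - θ := by linarith
    have htan : π - θ ≤ Real.tan (π - θ) := Real.le_tan hφ0 hφ2
    have hcosφ : 0 < Real.cos (π - θ) := by
      rw [Real.cos_pi_sub]; linarith
    have hkey : (π - θ) * Real.cos (π - θ) ≤ Real.sin (π - θ) := by
      have := mul_le_mul_of_nonneg_right htan hcosφ.le
      rwa [Real.tan_eq_sin_div_cos, div_mul_cancel₀ _ hcosφ.ne'] at this
    rw [Real.sin_pi_sub, Real.cos_pi_sub] at hkey
    nlinarith
/-- `Nten c m x h i j` is the CNTK norm tensor N^{(h)}_{i,j}(x) for an image `x` with `c`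
channels (zero-padded over all of ℤ×ℤ) and convolutional filter size q = 2m+1. -/
noncomputable def Nten (c m : ℕ) (x : ℤ → ℤ → Fin c → ℝ) : ℕ → ℤ → ℤ → ℝ
  | 0, i, j => ((2 * (m : ℝ) + 1)) ^ 2 * ∑ l : Fin c, (x i j l) ^ 2
  | h + 1, i, j => (1 / (2 * (m : ℝ) + 1) ^ 2) *
      ∑ a ∈ Finset.Icc (-(m : ℤ)) (m : ℤ), ∑ b ∈ Finset.Icc (-(m : ℤ)) (m : ℤ),
        Nten c m x h (i + a) (j + b)

/-- `Gam c m y z h i j i' j'` is the ReLU-CNTK covariance tensor Γ^{(h)}_{i,j,i',j'}(y,z). -/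
noncomputable def Gam (c m : ℕ) (y z : ℤ → ℤ → Fin c → ℝ) : ℕ → ℤ → ℤ → ℤ → ℤ → ℝ
  | 0, i, j, i', j' => ∑ l : Fin c, y i j l * z i' j' l
  | h + 1, i, j, i', j' =>
      (Real.sqrt (Nten c m y (h + 1) i j * Nten c m z (h + 1) i' j') / (2 * (m : ℝ) + 1) ^ 2) *
        kappa1 ((∑ a ∈ Finset.Icc (-(m : ℤ)) (m : ℤ), ∑ b ∈ Finset.Icc (-(m : ℤ)) (m : ℤ),
            Gam c m y z h (i + a) (j + b) (i' + a) (j' + b)) /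
          Real.sqrt (Nten c m y (h + 1) i j * Nten c m z (h + 1) i' j'))

/-- `Gdot c m y z h i j i' j'` is the ReLU-CNTK derivative covariance tensor
Γ̇^{(h)}_{i,j,i',j'}(y,z), defined for h ≥ 1 (the value at h = 0 is unused, set to 0). -/
noncomputable def Gdot (c m : ℕ) (y z : ℤ → ℤ → Fin c → ℝ) : ℕ → ℤ → ℤ → ℤ → ℤ → ℝ
  | 0, _, _, _, _ => 0
  | h + 1, i, j, i', j' =>
      (1 / (2 * (m : ℝ) + 1) ^ 2) *
        kappa0 ((∑ a ∈ Finset.Icc (-(m : ℤ)) (m : ℤ), ∑ b ∈ Finset.Icc (-(m : ℤ)) (m : ℤ),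
            Gam c m y z h (i + a) (j + b) (i' + a) (j' + b)) /
          Real.sqrt (Nten c m y (h + 1) i j * Nten c m z (h + 1) i' j'))


/-- `PiT c m y z h i j i' j'` is the ReLU-CNTK tensor Π^{(h)}_{i,j,i',j'}(y,z) defined by the
recursion used for layers h < L: Π^{(0)} = 0 and
Π^{(h)} = Σ_{a,b} [Π^{(h-1)} ⊙ Γ̇^{(h)} + Γ^{(h)}]_{i+a,j+b,i'+a,j'+b}. -/
noncomputable def PiT (c m : ℕ) (y z : ℤ → ℤ → Fin c → ℝ) : ℕ → ℤ → ℤ → ℤ → ℤ → ℝ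
  | 0, _, _, _, _ => 0
  | h + 1, i, j, i', j' =>
      ∑ a ∈ Finset.Icc (-(m : ℤ)) (m : ℤ), ∑ b ∈ Finset.Icc (-(m : ℤ)) (m : ℤ),
        (PiT c m y z h (i + a) (j + b) (i' + a) (j' + b) *
            Gdot c m y z (h + 1) (i + a) (j + b) (i' + a) (j' + b) +
          Gam c m y z (h + 1) (i + a) (j + b) (i' + a) (j' + b))

/-- The top-layer tensor Π^{(L)} := Π^{(L-1)} ⊙ Γ̇^{(L)}. -/
noncomputable def PiL (c m : ℕ) (y z : ℤ → ℤ → Fin c → ℝ) (L : ℕ) (i j i' j' : ℤ) : ℝ :=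
  PiT c m y z (L - 1) i j i' j' * Gdot c m y z L i j i' j'

lemma Q_pos (m : ℕ) : (0:ℝ) < (2 * (m:ℝ) + 1) ^ 2 := by positivity

lemma Nten_nonneg (c m : ℕ) (x : ℤ → ℤ → Fin c → ℝ) :
    ∀ (h : ℕ) (i j : ℤ), 0 ≤ Nten c m x h i j
  | 0, i, j => by
    rw [Nten]; positivity
  | h + 1, i, j => by
    rw [Nten]
    exact mul_nonneg (by positivity) (Finset.sum_nonneg fun a _ =>
      Finset.sum_nonneg fun b _ => Nten_nonneg c m x h _ _)

lemma sum_Nten (c m : ℕ) (x : ℤ → ℤ → Fin c → ℝ) (h : ℕ) (i j : ℤ) :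
    ∑ a ∈ Finset.Icc (-(m : ℤ)) (m : ℤ), ∑ b ∈ Finset.Icc (-(m : ℤ)) (m : ℤ),
        Nten c m x h (i + a) (j + b) = (2 * (m:ℝ) + 1) ^ 2 * Nten c m x (h + 1) i j := by
  rw [Nten, one_div, mul_inv_cancel_left₀ (Q_pos m).ne']

lemma Gam_diag (c m : ℕ) (y : ℤ → ℤ → Fin c → ℝ) :
    ∀ (h : ℕ) (i j : ℤ),
      Gam c m y y h i j i j = Nten c m y h i j / (2 * (m:ℝ) + 1) ^ 2
  | 0, i, j => by
    rw [Gam, Nten, mul_div_cancel_left₀ _ (Q_pos m).ne']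
    simp [sq]
  | h + 1, i, j => by
    rw [Gam]
    have hS : (∑ a ∈ Finset.Icc (-(m : ℤ)) (m : ℤ), ∑ b ∈ Finset.Icc (-(m : ℤ)) (m : ℤ),
        Gam c m y y h (i + a) (j + b) (i + a) (j + b)) = Nten c m y (h + 1) i j := by
      simp_rw [Gam_diag c m y h, ← Finset.sum_div]
      rw [sum_Nten, mul_div_cancel_left₀ _ (Q_pos m).ne']
    rw [hS, Real.sqrt_mul_self (Nten_nonneg c m y (h + 1) i j)]
    rcases (Nten_nonneg c m y (h + 1) i j).eq_or_lt' with h0 | h0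
    · rw [h0]; simp
    · rw [div_self h0.ne', kappa1_one, mul_one]

lemma sum_Gam_diag (c m : ℕ) (y : ℤ → ℤ → Fin c → ℝ) (h : ℕ) (i j : ℤ) :
    (∑ a ∈ Finset.Icc (-(m : ℤ)) (m : ℤ), ∑ b ∈ Finset.Icc (-(m : ℤ)) (m : ℤ),
        Gam c m y y h (i + a) (j + b) (i + a) (j + b)) = Nten c m y (h + 1) i j := by
  simp_rw [Gam_diag c m y h, ← Finset.sum_div]
  rw [sum_Nten, mul_div_cancel_left₀ _ (Q_pos m).ne']

lemma Gam_CS (c m : ℕ) (y z : ℤ → ℤ → Fin c → ℝ) :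
    ∀ (h : ℕ) (i j i' j' : ℤ),
      |Gam c m y z h i j i' j'| ≤
        Real.sqrt (Nten c m y h i j * Nten c m z h i' j') / (2 * (m:ℝ) + 1) ^ 2
  | 0, i, j, i', j' => by
    rw [Gam, Nten, Nten]
    have hcs : (∑ l : Fin c, y i j l * z i' j' l) ^ 2 ≤
        (∑ l : Fin c, (y i j l) ^ 2) * (∑ l : Fin c, (z i' j' l) ^ 2) :=
      Finset.sum_mul_sq_le_sq_mul_sq _ _ _
    have h1 : |∑ l : Fin c, y i j l * z i' j' l| ≤
        Real.sqrt ((∑ l : Fin c, (y i j l) ^ 2) * (∑ l : Fin c, (z i' j' l) ^ 2)) := by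
      rw [← Real.sqrt_sq_eq_abs]; exact Real.sqrt_le_sqrt hcs
    refine h1.trans_eq ?_
    rw [show ((2 * (m:ℝ) + 1) ^ 2 * ∑ l : Fin c, (y i j l) ^ 2) *
          ((2 * (m:ℝ) + 1) ^ 2 * ∑ l : Fin c, (z i' j' l) ^ 2)
        = ((2 * (m:ℝ) + 1) ^ 2) ^ 2 *
          ((∑ l : Fin c, (y i j l) ^ 2) * (∑ l : Fin c, (z i' j' l) ^ 2)) by ring,
      Real.sqrt_mul (sq_nonneg _), Real.sqrt_sq (Q_pos m).le,
      mul_div_cancel_left₀ _ (Q_pos m).ne']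
  | h + 1, i, j, i', j' => by
    rw [Gam]
    set Ny := Nten c m y (h + 1) i j with hNy
    set Nz := Nten c m z (h + 1) i' j' with hNz
    set D := Real.sqrt (Ny * Nz) with hD
    have hD0 : 0 ≤ D := Real.sqrt_nonneg _
    set S := ∑ a ∈ Finset.Icc (-(m : ℤ)) (m : ℤ), ∑ b ∈ Finset.Icc (-(m : ℤ)) (m : ℤ),
        Gam c m y z h (i + a) (j + b) (i' + a) (j' + b) with hSdef
    have hSle : |S| ≤ D := by
      have step1 : |S| ≤ ∑ a ∈ Finset.Icc (-(m : ℤ)) (m : ℤ), ∑ b ∈ Finset.Icc (-(m : ℤ)) (m : ℤ),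
          |Gam c m y z h (i + a) (j + b) (i' + a) (j' + b)| :=
        (Finset.abs_sum_le_sum_abs _ _).trans
          (Finset.sum_le_sum fun a _ => Finset.abs_sum_le_sum_abs _ _)
      have step2 : ∑ a ∈ Finset.Icc (-(m : ℤ)) (m : ℤ), ∑ b ∈ Finset.Icc (-(m : ℤ)) (m : ℤ),
            |Gam c m y z h (i + a) (j + b) (i' + a) (j' + b)| ≤
          ∑ a ∈ Finset.Icc (-(m : ℤ)) (m : ℤ), ∑ b ∈ Finset.Icc (-(m : ℤ)) (m : ℤ),
            Real.sqrt (Nten c m y h (i + a) (j + b) * Nten c m z h (i' + a) (j' + b)) /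
              (2 * (m:ℝ) + 1) ^ 2 :=
        Finset.sum_le_sum fun a _ => Finset.sum_le_sum fun b _ => Gam_CS c m y z h _ _ _ _
      have step3 : ∑ a ∈ Finset.Icc (-(m : ℤ)) (m : ℤ), ∑ b ∈ Finset.Icc (-(m : ℤ)) (m : ℤ),
            Real.sqrt (Nten c m y h (i + a) (j + b) * Nten c m z h (i' + a) (j' + b)) ≤
          Real.sqrt ((∑ a ∈ Finset.Icc (-(m : ℤ)) (m : ℤ), ∑ b ∈ Finset.Icc (-(m : ℤ)) (m : ℤ),
              Nten c m y h (i + a) (j + b)) *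
            (∑ a ∈ Finset.Icc (-(m : ℤ)) (m : ℤ), ∑ b ∈ Finset.Icc (-(m : ℤ)) (m : ℤ),
              Nten c m z h (i' + a) (j' + b))) := by
        refine le_trans (Finset.sum_le_sum fun a _ => sum_sqrt_mul_le _ _ _
          (fun b _ => Nten_nonneg c m y h _ _) (fun b _ => Nten_nonneg c m z h _ _)) ?_
        exact sum_sqrt_mul_le _ _ _
          (fun a _ => Finset.sum_nonneg fun b _ => Nten_nonneg c m y h _ _)
          (fun a _ => Finset.sum_nonneg fun b _ => Nten_nonneg c m z h _ _)
      rw [sum_Nten, sum_Nten, show ((2 * (m:ℝ) + 1) ^ 2 * Ny) * ((2 * (m:ℝ) + 1) ^ 2 * Nz)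
            = ((2 * (m:ℝ) + 1) ^ 2) ^ 2 * (Ny * Nz) by ring,
        Real.sqrt_mul (sq_nonneg _), Real.sqrt_sq (Q_pos m).le] at step3
      have step4 : ∑ a ∈ Finset.Icc (-(m : ℤ)) (m : ℤ), ∑ b ∈ Finset.Icc (-(m : ℤ)) (m : ℤ),
            Real.sqrt (Nten c m y h (i + a) (j + b) * Nten c m z h (i' + a) (j' + b)) /
              (2 * (m:ℝ) + 1) ^ 2 ≤ D := by
        simp_rw [← Finset.sum_div]
        rw [div_le_iff₀ (Q_pos m), hD]
        linarith [step3]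
      exact (step1.trans step2).trans step4
    have hα : -1 ≤ S / D ∧ S / D ≤ 1 := by
      rcases hD0.eq_or_lt' with h0 | h0
      · rw [h0, div_zero]; norm_num
      · constructor
        · rw [le_div_iff₀ h0]; have := neg_abs_le S; linarith
        · rw [div_le_one h0]; linarith [le_abs_self S]
    calc |D / (2 * (m:ℝ) + 1) ^ 2 * kappa1 (S / D)|
        = D / (2 * (m:ℝ) + 1) ^ 2 * |kappa1 (S / D)| := by
          rw [abs_mul, abs_of_nonneg (by positivity)]
      _ ≤ D / (2 * (m:ℝ) + 1) ^ 2 * 1 := by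
          apply mul_le_mul_of_nonneg_left _ (by positivity)
          exact abs_le.2 ⟨by linarith [kappa1_nonneg hα.1 hα.2], kappa1_le_one hα.1 hα.2⟩
      _ = D / (2 * (m:ℝ) + 1) ^ 2 := mul_one _

lemma Gdot_nonneg (c m : ℕ) (y z : ℤ → ℤ → Fin c → ℝ) (h : ℕ) (i j i' j' : ℤ) :
    0 ≤ Gdot c m y z h i j i' j' := by
  cases h with
  | zero => rw [Gdot]
  | succ h => rw [Gdot]; exact mul_nonneg (by positivity) (kappa0_nonneg _)

lemma Gdot_le (c m : ℕ) (y z : ℤ → ℤ → Fin c → ℝ) (h : ℕ) (i j i' j' : ℤ) :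
    Gdot c m y z h i j i' j' ≤ 1 / (2 * (m:ℝ) + 1) ^ 2 := by
  cases h with
  | zero => rw [Gdot]; positivity
  | succ h =>
    rw [Gdot]
    calc 1 / (2 * (m:ℝ) + 1) ^ 2 * kappa0 _ ≤ 1 / (2 * (m:ℝ) + 1) ^ 2 * 1 :=
          mul_le_mul_of_nonneg_left (kappa0_le_one _) (by positivity)
      _ = 1 / (2 * (m:ℝ) + 1) ^ 2 := mul_one _

lemma Gdot_diag (c m : ℕ) (y : ℤ → ℤ → Fin c → ℝ) (h : ℕ) (i j : ℤ)
    (hpos : 0 < Nten c m y (h + 1) i j) :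
    Gdot c m y y (h + 1) i j i j = 1 / (2 * (m:ℝ) + 1) ^ 2 := by
  rw [Gdot, sum_Gam_diag, Real.sqrt_mul_self (Nten_nonneg c m y (h + 1) i j),
    div_self hpos.ne', kappa0_one, mul_one]

lemma PiT_diag (c m : ℕ) (y : ℤ → ℤ → Fin c → ℝ) :
    ∀ (h : ℕ) (i j : ℤ), PiT c m y y h i j i j = (h : ℝ) * Nten c m y (h + 1) i j
  | 0, i, j => by rw [PiT]; simp
  | h + 1, i, j => by
    rw [PiT]
    have key : ∀ a ∈ Finset.Icc (-(m : ℤ)) (m : ℤ), ∀ b ∈ Finset.Icc (-(m : ℤ)) (m : ℤ),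
        PiT c m y y h (i + a) (j + b) (i + a) (j + b) *
            Gdot c m y y (h + 1) (i + a) (j + b) (i + a) (j + b) +
          Gam c m y y (h + 1) (i + a) (j + b) (i + a) (j + b) =
        (((h : ℝ) + 1) / (2 * (m:ℝ) + 1) ^ 2) * Nten c m y (h + 1) (i + a) (j + b) := by
      intro a _ b _
      rw [PiT_diag c m y h, Gam_diag]
      rcases (Nten_nonneg c m y (h + 1) (i + a) (j + b)).eq_or_lt' with h0 | h0
      · rw [h0]; simp
      · rw [Gdot_diag c m y h _ _ h0]
        field_simp
    rw [Finset.sum_congr rfl fun a ha => Finset.sum_congr rfl fun b hb => key a ha b hb]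
    simp_rw [← Finset.mul_sum]
    rw [sum_Nten]
    push_cast
    field_simp

lemma PiT_diag_nonneg (c m : ℕ) (y : ℤ → ℤ → Fin c → ℝ) (h : ℕ) (i j : ℤ) :
    0 ≤ PiT c m y y h i j i j := by
  rw [PiT_diag]
  exact mul_nonneg (Nat.cast_nonneg h) (Nten_nonneg c m y (h + 1) i j)

lemma Gam_diag_nonneg (c m : ℕ) (y : ℤ → ℤ → Fin c → ℝ) (h : ℕ) (i j : ℤ) :
    0 ≤ Gam c m y y h i j i j := by
  rw [Gam_diag]
  exact div_nonneg (Nten_nonneg c m y h i j) (Q_pos m).le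

lemma PiT_mul_Gdot_CS (c m : ℕ) (y z : ℤ → ℤ → Fin c → ℝ) (h : ℕ) (p q p' q' : ℤ)
    (ih : |PiT c m y z h p q p' q'| ≤
      Real.sqrt (PiT c m y y h p q p q * PiT c m z z h p' q' p' q')) :
    |PiT c m y z h p q p' q' * Gdot c m y z (h + 1) p q p' q'| ≤
      Real.sqrt ((PiT c m y y h p q p q * Gdot c m y y (h + 1) p q p q) *
        (PiT c m z z h p' q' p' q' * Gdot c m z z (h + 1) p' q' p' q')) := by
  rcases (PiT_diag_nonneg c m y h p q).eq_or_lt' with h0 | hPy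
  · have h1 : PiT c m y z h p q p' q' = 0 := by
      have h2 := ih
      rw [h0, zero_mul, Real.sqrt_zero] at h2
      exact abs_eq_zero.1 (le_antisymm h2 (abs_nonneg _))
    rw [h1, zero_mul, abs_zero]
    exact Real.sqrt_nonneg _
  rcases (PiT_diag_nonneg c m z h p' q').eq_or_lt' with h0 | hPz
  · have h1 : PiT c m y z h p q p' q' = 0 := by
      have h2 := ih
      rw [h0, mul_zero, Real.sqrt_zero] at h2
      exact abs_eq_zero.1 (le_antisymm h2 (abs_nonneg _))
    rw [h1, zero_mul, abs_zero]
    exact Real.sqrt_nonneg _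
  have hNy : 0 < Nten c m y (h + 1) p q := by
    have hd := PiT_diag c m y h p q
    by_contra hcon
    push_neg at hcon
    have : (h : ℝ) * Nten c m y (h + 1) p q ≤ 0 :=
      mul_nonpos_of_nonneg_of_nonpos (Nat.cast_nonneg h) hcon
    rw [← hd] at this
    linarith
  have hNz : 0 < Nten c m z (h + 1) p' q' := by
    have hd := PiT_diag c m z h p' q'
    by_contra hcon
    push_neg at hcon
    have : (h : ℝ) * Nten c m z (h + 1) p' q' ≤ 0 :=
      mul_nonpos_of_nonneg_of_nonpos (Nat.cast_nonneg h) hcon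
    rw [← hd] at this
    linarith
  rw [Gdot_diag c m y h p q hNy, Gdot_diag c m z h p' q' hNz, abs_mul]
  have hG : |Gdot c m y z (h + 1) p q p' q'| ≤ 1 / (2 * (m:ℝ) + 1) ^ 2 := by
    rw [abs_of_nonneg (Gdot_nonneg c m y z (h + 1) p q p' q')]
    exact Gdot_le c m y z (h + 1) p q p' q'
  calc |PiT c m y z h p q p' q'| * |Gdot c m y z (h + 1) p q p' q'|
      ≤ Real.sqrt (PiT c m y y h p q p q * PiT c m z z h p' q' p' q') *
          (1 / (2 * (m:ℝ) + 1) ^ 2) :=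
        mul_le_mul ih hG (abs_nonneg _) (Real.sqrt_nonneg _)
    _ = Real.sqrt ((PiT c m y y h p q p q * (1 / (2 * (m:ℝ) + 1) ^ 2)) *
          (PiT c m z z h p' q' p' q' * (1 / (2 * (m:ℝ) + 1) ^ 2))) := by
        rw [show (PiT c m y y h p q p q * (1 / (2 * (m:ℝ) + 1) ^ 2)) *
              (PiT c m z z h p' q' p' q' * (1 / (2 * (m:ℝ) + 1) ^ 2)) =
            (PiT c m y y h p q p q * PiT c m z z h p' q' p' q') *
              (1 / (2 * (m:ℝ) + 1) ^ 2) ^ 2 by ring,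
          Real.sqrt_mul (mul_nonneg hPy.le hPz.le), Real.sqrt_sq (by positivity)]

lemma Gam_CS' (c m : ℕ) (y z : ℤ → ℤ → Fin c → ℝ) (h : ℕ) (p q p' q' : ℤ) :
    |Gam c m y z h p q p' q'| ≤
      Real.sqrt (Gam c m y y h p q p q * Gam c m z z h p' q' p' q') := by
  refine (Gam_CS c m y z h p q p' q').trans_eq ?_
  rw [Gam_diag, Gam_diag,
    show (Nten c m y h p q / (2 * (m:ℝ) + 1) ^ 2) *
        (Nten c m z h p' q' / (2 * (m:ℝ) + 1) ^ 2) =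
      (Nten c m y h p q * Nten c m z h p' q') * (1 / (2 * (m:ℝ) + 1) ^ 2) ^ 2 by ring,
    Real.sqrt_mul (mul_nonneg (Nten_nonneg c m y h p q) (Nten_nonneg c m z h p' q')),
    Real.sqrt_sq (by positivity), mul_one_div]

lemma PiT_CS (c m : ℕ) (y z : ℤ → ℤ → Fin c → ℝ) :
    ∀ (h : ℕ) (i j i' j' : ℤ),
      |PiT c m y z h i j i' j'| ≤
        Real.sqrt (PiT c m y y h i j i j * PiT c m z z h i' j' i' j')
  | 0, i, j, i', j' => by rw [PiT]; simp
  | h + 1, i, j, i', j' => by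
    have Tnn : ∀ (w : ℤ → ℤ → Fin c → ℝ) (p q : ℤ),
        0 ≤ PiT c m w w h p q p q * Gdot c m w w (h + 1) p q p q +
          Gam c m w w (h + 1) p q p q := fun w p q =>
      add_nonneg (mul_nonneg (PiT_diag_nonneg c m w h p q) (Gdot_nonneg c m w w (h + 1) p q p q))
        (Gam_diag_nonneg c m w (h + 1) p q)
    have key : ∀ (a b : ℤ),
        |PiT c m y z h (i + a) (j + b) (i' + a) (j' + b) *
            Gdot c m y z (h + 1) (i + a) (j + b) (i' + a) (j' + b) +
          Gam c m y z (h + 1) (i + a) (j + b) (i' + a) (j' + b)| ≤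
        Real.sqrt ((PiT c m y y h (i + a) (j + b) (i + a) (j + b) *
              Gdot c m y y (h + 1) (i + a) (j + b) (i + a) (j + b) +
            Gam c m y y (h + 1) (i + a) (j + b) (i + a) (j + b)) *
          (PiT c m z z h (i' + a) (j' + b) (i' + a) (j' + b) *
              Gdot c m z z (h + 1) (i' + a) (j' + b) (i' + a) (j' + b) +
            Gam c m z z (h + 1) (i' + a) (j' + b) (i' + a) (j' + b))) := by
      intro a b
      have hA := PiT_mul_Gdot_CS c m y z h (i + a) (j + b) (i' + a) (j' + b)
        (PiT_CS c m y z h (i + a) (j + b) (i' + a) (j' + b))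
      have hB := Gam_CS' c m y z (h + 1) (i + a) (j + b) (i' + a) (j' + b)
      calc |PiT c m y z h (i + a) (j + b) (i' + a) (j' + b) *
              Gdot c m y z (h + 1) (i + a) (j + b) (i' + a) (j' + b) +
            Gam c m y z (h + 1) (i + a) (j + b) (i' + a) (j' + b)|
          ≤ |PiT c m y z h (i + a) (j + b) (i' + a) (j' + b) *
              Gdot c m y z (h + 1) (i + a) (j + b) (i' + a) (j' + b)| +
            |Gam c m y z (h + 1) (i + a) (j + b) (i' + a) (j' + b)| := abs_add_le _ _
        _ ≤ _ := by
            refine (add_le_add hA hB).trans ?_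
            exact sqrt_add_sqrt_le
              (mul_nonneg (PiT_diag_nonneg c m y h _ _) (Gdot_nonneg c m y y (h + 1) _ _ _ _))
              (Gam_diag_nonneg c m y (h + 1) _ _)
              (mul_nonneg (PiT_diag_nonneg c m z h _ _) (Gdot_nonneg c m z z (h + 1) _ _ _ _))
              (Gam_diag_nonneg c m z (h + 1) _ _)
    rw [PiT, PiT, PiT]
    have step1 := (Finset.abs_sum_le_sum_abs
      (fun a => ∑ b ∈ Finset.Icc (-(m : ℤ)) (m : ℤ),
        (PiT c m y z h (i + a) (j + b) (i' + a) (j' + b) *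
            Gdot c m y z (h + 1) (i + a) (j + b) (i' + a) (j' + b) +
          Gam c m y z (h + 1) (i + a) (j + b) (i' + a) (j' + b)))
      (Finset.Icc (-(m : ℤ)) (m : ℤ))).trans
      (Finset.sum_le_sum fun a _ => Finset.abs_sum_le_sum_abs _ _)
    refine step1.trans ?_
    refine le_trans (Finset.sum_le_sum fun a _ => Finset.sum_le_sum fun b _ => key a b) ?_
    refine le_trans (Finset.sum_le_sum fun a _ => sum_sqrt_mul_le _ _ _
      (fun b _ => Tnn y _ _) (fun b _ => Tnn z _ _)) ?_
    exact sum_sqrt_mul_le _ _ _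
      (fun a _ => Finset.sum_nonneg fun b _ => Tnn y _ _)
      (fun a _ => Finset.sum_nonneg fun b _ => Tnn z _ _)

/-- diagonal norm identities and Cauchy–Schwarz property of the ReLU-CNTK
Π-tensors. -/
theorem Pi_tensor_properties (c m L : ℕ) (hL : 1 ≤ L) (y z : ℤ → ℤ → Fin c → ℝ) :
    (∀ h < L, ∀ i j : ℤ, PiT c m y y h i j i j = (h : ℝ) * Nten c m y (h + 1) i j) ∧
      (∀ i j : ℤ, PiL c m y y L i j i j =
        (((L : ℝ) - 1) / (2 * (m : ℝ) + 1) ^ 2) * Nten c m y L i j) ∧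
      (∀ h < L, ∀ i j i' j' : ℤ,
        |PiT c m y z h i j i' j'| ≤
          Real.sqrt (PiT c m y y h i j i j * PiT c m z z h i' j' i' j')) ∧
      (∀ i j i' j' : ℤ,
        |PiL c m y z L i j i' j'| ≤
          Real.sqrt (PiL c m y y L i j i j * PiL c m z z L i' j' i' j')) := by
  obtain ⟨K, rfl⟩ : ∃ K, L = K + 1 := ⟨L - 1, (Nat.succ_pred_eq_of_pos hL).symm⟩
  refine ⟨fun h _ i j => PiT_diag c m y h i j, ?_, 
    fun h _ i j i' j' => PiT_CS c m y z h i j i' j', ?_⟩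
  · intro i j
    simp only [PiL, Nat.add_sub_cancel]
    rw [PiT_diag]
    rcases (Nten_nonneg c m y (K + 1) i j).eq_or_lt' with h0 | h0
    · rw [h0]; simp
    · rw [Gdot_diag c m y K i j h0]
      push_cast
      ring
  · intro i j i' j'
    simp only [PiL, Nat.add_sub_cancel]
    exact PiT_mul_Gdot_CS c m y z K i j i' j' (PiT_CS c m y z K i j i' j')
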